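/- arXiv:1008.1504 — 4 statements merged into one kernel-verified Lean document; each statement's English description precedes it below -/
import Mathlib

section
/- Let h > 0, f : h·ℤ → ℝ, a ∈ h·ℤ, and for j ≥ 1 define the j-fold iterated delta integral I_j(t) recursively by I_1(t) = ∫_a^{σ(t)} f(ξ) Δξ and I_{j+1}(t) = ∫_a^{σ(t)} I_j(τ) Δτ, where σ(t) = t + h and ∫_a^b g Δξ = h·∑_{k=0}^{(b-a)/h-1} g(a+kh). Then for any 0 ≤ i < j, the j-th delta derivative of I_{j-i} satisfies (I_{j-i})^{Δ^j}(t) = f^{Δ^i}(σ^{j-i}(t)) = f^{Δ^i}(t + (j-i)h) for all t ≥ a in h·ℤ, where f^{Δ^i} denotes the i-th iterated delta derivative g^Δ(t) = (g(t+h)-g(t))/h. -/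
/-!
On `h·ℤ` the delta integral `∫_a^{σ(t)} g Δξ` is `h` times a partial sum up to the index of `t`,
so its delta derivative is `g ∘ σ` (for `t ≥ a - h`). Iterating, the `m`-th delta derivative of the
`m`-fold integral of `f` is `f ∘ σ^m`. Delta derivatives commute with shifts and, being forward
differences, only see values to the right, so `i` further derivatives give `f^{Δ^i} ∘ σ^m`.
-/

namespace HZ

variable {𝕜 : Type*} [Field 𝕜]

def deltaDeriv (h : 𝕜) (g : ℤ → 𝕜) (n : ℤ) : 𝕜 := (g (n + 1) - g n) / h

def deltaIntegral (h : 𝕜) (g : ℤ → 𝕜) (n : ℤ) : 𝕜 := h * ∑ k ∈ Finset.range (n + 1).toNat, g k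

theorem deltaDeriv_iterate_congr (h : 𝕜) (i : ℕ) {g₁ g₂ : ℤ → 𝕜} {n₀ : ℤ}
    (hg : ∀ k, n₀ ≤ k → g₁ k = g₂ k) {n : ℤ} (hn : n₀ ≤ n) :
    (deltaDeriv h)^[i] g₁ n = (deltaDeriv h)^[i] g₂ n := by
  induction i generalizing g₁ g₂ with
  | zero => exact hg n hn
  | succ i ih =>
    rw [Function.iterate_succ_apply, Function.iterate_succ_apply]
    refine ih fun k hk => ?_
    rw [deltaDeriv, deltaDeriv, hg k hk, hg (k + 1) (by omega)]

theorem deltaDeriv_iterate_comp_add (h : 𝕜) (i : ℕ) (g : ℤ → 𝕜) (m n : ℤ) :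
    (deltaDeriv h)^[i] (fun k => g (k + m)) n = (deltaDeriv h)^[i] g (n + m) := by
  induction i generalizing g with
  | zero => rfl
  | succ i ih =>
    have hcomm : deltaDeriv h (fun k => g (k + m)) = fun k => deltaDeriv h g (k + m) := by
      funext k
      simp only [deltaDeriv, add_right_comm k 1 m]
    rw [Function.iterate_succ_apply, Function.iterate_succ_apply, hcomm, ih]

theorem deltaDeriv_deltaIntegral {h : 𝕜} (hh : h ≠ 0) (g : ℤ → 𝕜) {n : ℤ} (hn : -1 ≤ n) :
    deltaDeriv h (deltaIntegral h g) n = g (n + 1) := by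
  have hsucc : (n + 1 + 1).toNat = (n + 1).toNat + 1 := by omega
  have hcast : ((n + 1).toNat : ℤ) = n + 1 := by omega
  rw [deltaDeriv, deltaIntegral, deltaIntegral, hsucc, Finset.sum_range_succ, hcast]
  field_simp
  ring

theorem deltaDeriv_iterate_deltaIntegral_iterate {h : 𝕜} (hh : h ≠ 0) (f : ℤ → 𝕜) (m : ℕ)
    {n : ℤ} (hn : -1 ≤ n) :
    (deltaDeriv h)^[m] ((deltaIntegral h)^[m] f) n = f (n + m) := by
  induction m generalizing n with
  | zero => simp
  | succ m ih =>
    rw [Function.iterate_succ_apply, Function.iterate_succ_apply',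
      deltaDeriv_iterate_congr h m (g₂ := fun k => (deltaIntegral h)^[m] f (k + 1))
        (fun k hk => deltaDeriv_deltaIntegral hh _ hk) hn,
      deltaDeriv_iterate_comp_add, ih (by omega)]
    push_cast
    ring_nf

end HZ

theorem Function.eq_iterate_succ_of_succ {α : Type*} {F : α → α} {x : α} {I : ℕ → α}
    (hI1 : I 1 = F x) (hIS : ∀ j, I (j + 1) = F (I j)) (m : ℕ) : I (m + 1) = F^[m + 1] x := by
  induction m with
  | zero => exact hI1
  | succ m ih => rw [hIS, ih, Function.iterate_succ_apply' F (m + 1)]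

open HZ

/-- Formula (3.9) of the paper, on the time scale `h·ℤ`.
Grid points `t = a + n·h` are indexed by `n : ℤ`, so a function
`g : ℤ → ℝ` stands for `t ↦ g((t-a)/h)`.  The delta derivative is
`D g n = (g(n+1) - g(n))/h` (i.e. `(g(t+h)-g(t))/h`), and
`J g n = h·∑_{k=0}^{n} g(k)` is the delta integral `∫_a^{σ(t)} g Δξ`.
With `I₁ = J f` and `I_{j+1} = J (I_j)`, for any `0 ≤ i < j` the `j`-th
delta derivative of the `(j-i)`-fold iterated integral satisfies
`(I_{j-i})^{Δ^j}(t) = f^{Δ^i}(σ^{j-i}(t)) = f^{Δ^i}(t + (j-i)h)`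
for all grid points `t ≥ a`. -/
theorem hZ_iterated_integral_derivative (h : ℝ) (hh : 0 < h) (f : ℤ → ℝ)
    (D : (ℤ → ℝ) → (ℤ → ℝ)) (hD : ∀ g n, D g n = (g (n + 1) - g n) / h)
    (J : (ℤ → ℝ) → (ℤ → ℝ))
    (hJ : ∀ g n, J g n = h * ∑ k ∈ Finset.range (n + 1).toNat, g k)
    (I : ℕ → (ℤ → ℝ)) (hI1 : I 1 = J f) (hIS : ∀ j, I (j + 1) = J (I j)) :
    ∀ i j : ℕ, i < j → ∀ n : ℤ, 0 ≤ n →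
      D^[j] (I (j - i)) n = D^[i] f (n + (j - i)) := by
  intro i j hij n hn
  obtain rfl : D = deltaDeriv h := funext fun g => funext (hD g)
  obtain rfl : J = deltaIntegral h := funext fun g => funext (hJ g)
  obtain ⟨m, rfl⟩ := Nat.exists_eq_add_of_lt hij
  have hm : i + m + 1 - i = m + 1 := by omega
  rw [hm, Function.eq_iterate_succ_of_succ hI1 hIS, add_assoc i m 1, Function.iterate_add_apply,
    deltaDeriv_iterate_congr h i
      (fun k hk => deltaDeriv_iterate_deltaIntegral_iterate hh.ne' f (m + 1) hk)
      (by omega : (-1 : ℤ) ≤ n),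
    deltaDeriv_iterate_comp_add]
  push_cast
  ring_nf
end

section
/- Consider the discrete variational problem on ℤ: minimize L(y) = ∑_{t=a}^{b-1} L(t, y(t), Δy(t)) over functions y : [a,b]∩ℤ → ℝ with fixed endpoints y(a) = y_a and y(b) = y_b, where Δy(t) = y(t+1) − y(t). If y is a local minimizer (with respect to pointwise perturbations vanishing at a and b) and L(t,·,·) is continuously differentiable, then there is a constant c₁ such that ∂L/∂v (t, y(t), Δy(t)) = ∑_{τ=a}^{t} ∂L/∂u (τ, y(τ), Δy(τ)) + c₁ for all t ∈ [a, b−1]∩ℤ, where ∂L/∂u and ∂L/∂v denote partial derivatives with respect to the second and third arguments. -/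
/-!
Perturbing `y` at a single interior point `s` by `ε` changes only the terms `t = s - 1` and
`t = s` of the action, so the vanishing of the derivative at `ε = 0` is the discrete
Euler–Lagrange equation `L_v(s) = L_v(s - 1) + L_u(s)`. Summing it from `a` gives the integral
form with `c₁ = L_v(a) - L_u(a)`.
-/

open Finset Filter Topology

noncomputable def discreteAction (L : ℤ → ℝ × ℝ → ℝ) (a b : ℤ) (y : ℤ → ℝ) : ℝ :=
  ∑ t ∈ Icc a (b - 1), L t (y t, y (t + 1) - y t)

def IsLocalMinDiscreteAction (L : ℤ → ℝ × ℝ → ℝ) (a b : ℤ) (y : ℤ → ℝ) : Prop :=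
  ∃ δ > (0 : ℝ), ∀ z : ℤ → ℝ, z a = y a → z b = y b →
    (∀ t ∈ Icc a b, |z t - y t| < δ) → discreteAction L a b y ≤ discreteAction L a b z

noncomputable def firstVariation (L : ℤ → ℝ × ℝ → ℝ) (a b : ℤ) (y η : ℤ → ℝ) : ℝ :=
  ∑ t ∈ Icc a (b - 1), fderiv ℝ (L t) (y t, y (t + 1) - y t) (η t, η (t + 1) - η t)

section FirstVariation

variable {L : ℤ → ℝ × ℝ → ℝ} {a b : ℤ} {y : ℤ → ℝ}

theorem hasDerivAt_discreteAction_add_smul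
    (hL : ∀ t, DifferentiableAt ℝ (L t) (y t, y (t + 1) - y t)) (η : ℤ → ℝ) :
    HasDerivAt (fun ε : ℝ => discreteAction L a b (y + ε • η)) (firstVariation L a b y η) 0 := by
  refine HasDerivAt.fun_sum fun t _ => ?_
  have hline : ∀ s, HasDerivAt (fun ε : ℝ => y s + ε * η s) (η s) 0 := fun s => by
    simpa using ((hasDerivAt_id (0 : ℝ)).mul_const (η s)).const_add (y s)
  exact (hL t).hasFDerivAt.comp_hasDerivAt_of_eq 0
    ((hline t).prodMk ((hline (t + 1)).sub (hline t))) (by simp)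

theorem IsLocalMinDiscreteAction.firstVariation_eq_zero (hmin : IsLocalMinDiscreteAction L a b y)
    (hL : ∀ t, DifferentiableAt ℝ (L t) (y t, y (t + 1) - y t))
    {η : ℤ → ℝ} (ha : η a = 0) (hb : η b = 0) :
    firstVariation L a b y η = 0 := by
  obtain ⟨δ, hδ, hmin⟩ := hmin
  refine IsLocalMin.hasDerivAt_eq_zero ?_ (hasDerivAt_discreteAction_add_smul hL η)
  have hclose : ∀ᶠ ε : ℝ in 𝓝 0, ∀ t ∈ Icc a b, |ε * η t| < δ := by
    refine (eventually_all_finset _).2 fun t _ => ?_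
    have : Tendsto (fun ε : ℝ => |ε * η t|) (𝓝 0) (𝓝 0) := by
      simpa using (continuous_mul_const (η t)).abs.tendsto 0
    exact this.eventually (gt_mem_nhds hδ)
  filter_upwards [hclose] with ε hε
  simpa using hmin (y + ε • η) (by simp [ha]) (by simp [hb]) (by simpa using hε)

end FirstVariation

theorem sum_apply_pi_single_one {φ : ℤ → ℝ × ℝ →L[ℝ] ℝ} {a b s : ℤ} (has : a < s) (hsb : s < b) :
    ∑ t ∈ Icc a (b - 1),
        φ t ((Pi.single s 1 : ℤ → ℝ) t, (Pi.single s 1 : ℤ → ℝ) (t + 1) - (Pi.single s 1 : ℤ → ℝ) t)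
      = φ s (1, 0) + φ (s - 1) (0, 1) - φ s (0, 1) := by
  have hsplit : ∀ t u v, φ t (u, v) = u * φ t (1, 0) + v * φ t (0, 1) := fun t u v => by
    rw [← smul_eq_mul, ← smul_eq_mul, ← map_smul, ← map_smul, ← map_add]
    simp
  have hshift : ∀ t : ℤ, (Pi.single s 1 : ℤ → ℝ) (t + 1) = (Pi.single (s - 1) 1 : ℤ → ℝ) t :=
    fun t => by simp only [Pi.single_apply, eq_sub_iff_add_eq]
  rw [sum_congr rfl fun t _ => hsplit t _ _]
  simp only [hshift, sub_mul, sum_add_distrib, sum_sub_distrib, Pi.single_apply, ite_mul, one_mul,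
    zero_mul, sum_ite_eq', mem_Icc]
  rw [if_pos (by omega), if_pos (by omega), if_pos (by omega)]
  ring

theorem eq_sum_Icc_add_of_eq_add {F G : ℤ → ℝ} {a c : ℤ}
    (h : ∀ s ∈ Ioc a c, G s = G (s - 1) + F s) :
    ∀ t ∈ Icc a c, G t = ∑ τ ∈ Icc a t, F τ + (G a - F a) := by
  intro t ht
  rw [mem_Icc] at ht
  obtain ⟨hat, htc⟩ := ht
  induction t, hat using Int.leInduction with
  | base => simp
  | succ t hat ih =>
    rw [h (t + 1) (mem_Ioc.2 ⟨by omega, htc⟩), add_sub_cancel_right, ih (by omega),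
      ← insert_Icc_right_eq_Icc_add_one (by omega), sum_insert (by simp)]
    ring

theorem discrete_euler_lagrange_integral_form_general
    (a b : ℤ)
    (L : ℤ → ℝ × ℝ → ℝ) (hL : ∀ t, ContDiff ℝ 1 (L t))
    (y : ℤ → ℝ)
    (hmin : ∃ δ > (0 : ℝ), ∀ z : ℤ → ℝ, z a = y a → z b = y b →
      (∀ t ∈ Finset.Icc a b, |z t - y t| < δ) →
      ∑ t ∈ Finset.Icc a (b - 1), L t (y t, y (t + 1) - y t)
        ≤ ∑ t ∈ Finset.Icc a (b - 1), L t (z t, z (t + 1) - z t)) :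
    ∃ c₁ : ℝ, ∀ t ∈ Finset.Icc a (b - 1),
      fderiv ℝ (L t) (y t, y (t + 1) - y t) (0, 1)
        = (∑ τ ∈ Finset.Icc a t, fderiv ℝ (L τ) (y τ, y (τ + 1) - y τ) (1, 0)) + c₁ := by
  have hdiff : ∀ t, DifferentiableAt ℝ (L t) (y t, y (t + 1) - y t) :=
    fun t => ((hL t).differentiable one_ne_zero).differentiableAt
  refine ⟨_, eq_sum_Icc_add_of_eq_add (c := b - 1) fun s hs => ?_⟩
  rw [mem_Ioc] at hs
  have hEL := IsLocalMinDiscreteAction.firstVariation_eq_zero (L := L) hmin hdiff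
    (η := Pi.single s 1) (Pi.single_eq_of_ne (by omega) _) (Pi.single_eq_of_ne (by omega) _)
  rw [firstVariation, sum_apply_pi_single_one hs.1 (by omega : s < b)] at hEL
  linarith

/-- Corollary 1 on `𝕋 = ℤ` (first-order discrete Euler–Lagrange equation
in integral form).  Here `L t (u, v)` is the Lagrangian, `Δy(t) = y(t+1)-y(t)`,
the functional is `𝓛(y) = ∑_{t=a}^{b-1} L(t, y(t), Δy(t))`, and the partial
derivatives `∂L/∂u`, `∂L/∂v` are the Fréchet derivative in the directions
`(1,0)` and `(0,1)`.  If `y` is a local minimizer among functions with the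
same endpoint values at `a` and `b`, then there is a constant `c₁` with
`∂L/∂v(t,y(t),Δy(t)) = ∑_{τ=a}^{t} ∂L/∂u(τ,y(τ),Δy(τ)) + c₁`
for all `t ∈ [a, b-1] ∩ ℤ`. -/
theorem discrete_euler_lagrange_integral_form
    (a b : ℤ) (hab : a < b)
    (L : ℤ → ℝ × ℝ → ℝ) (hL : ∀ t, ContDiff ℝ 1 (L t))
    (y : ℤ → ℝ)
    (hmin : ∃ δ > (0 : ℝ), ∀ z : ℤ → ℝ, z a = y a → z b = y b →
      (∀ t ∈ Finset.Icc a b, |z t - y t| < δ) →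
      ∑ t ∈ Finset.Icc a (b - 1), L t (y t, y (t + 1) - y t)
        ≤ ∑ t ∈ Finset.Icc a (b - 1), L t (z t, z (t + 1) - z t)) :
    ∃ c₁ : ℝ, ∀ t ∈ Finset.Icc a (b - 1),
      fderiv ℝ (L t) (y t, y (t + 1) - y t) (0, 1)
        = (∑ τ ∈ Finset.Icc a t, fderiv ℝ (L τ) (y τ, y (τ + 1) - y τ) (1, 0)) + c₁ :=
  discrete_euler_lagrange_integral_form_general a b L hL y hmin
end

section
/- Consider the second-order discrete variational problem on ℤ: minimize L(y) = ∑_{t=a}^{b-2} L(t, y(t), Δy(t), Δ²y(t)) over y : [a,b]∩ℤ → ℝ with y(a), y(b−1), Δy(a), Δy(b−1) fixed, where Δy(t) = y(t+1)−y(t) and Δ²y(t) = y(t+2) − 2y(t+1) + y(t), and L is continuously differentiable in its last three arguments. If y is a local minimizer, then there exist constants c₁, c₂ such that for all t ∈ [a, b−2]∩ℤ: ∂L/∂w (t,y(t),Δy(t),Δ²y(t)) − ∑_{τ₂=a}^{t} ∂L/∂v (τ₂,y(τ₂),Δy(τ₂),Δ²y(τ₂)) + ∑_{τ₂=a}^{t}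 [ ∑_{τ₁=a}^{τ₂} ∂L/∂u (τ₁,y(τ₁),Δy(τ₁),Δ²y(τ₁)) + c₁ ] − c₂ = 0, where ∂L/∂u, ∂L/∂v, ∂L/∂w are the partial derivatives with respect to the second, third, and fourth arguments. -/
/-!
Perturbing `y` by `ε` at a single point `s ∈ [a + 2, b - 2]` keeps the boundary data, so
`ε ↦ action (y + ε • Pi.single s 1)` has a local minimum at `0`. Its derivative there only sees
the three jets at `s - 2, s - 1, s` and gives the pointwise Euler–Lagrange equation
`L_u(s) - ∇L_v(s) + ∇²L_w(s) = 0` (backward differences). Summing it twice gives the integral form: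
the equation says that the first difference of the integral form is constant, and `c₁` cancels it.
-/

open Finset

theorem Int.eq_of_forall_add_one_eq {α : Type*} {a b : ℤ} {u : ℤ → α}
    (h : ∀ t, a ≤ t → t < b → u (t + 1) = u t) : ∀ t ∈ Icc a b, u t = u a := by
  intro t ht
  rw [mem_Icc] at ht
  induction t, ht.1 using Int.leInduction with
  | base => rfl
  | succ t hat ih => rw [h t hat (by omega), ih ⟨hat, by omega⟩]

theorem Int.sum_Icc_add_one_right {M : Type*} [AddCommMonoid M] {a t : ℤ} (h : a ≤ t + 1)
    (f : ℤ → M) : ∑ τ ∈ Icc a (t + 1), f τ = ∑ τ ∈ Icc a t, f τ + f (t + 1) := by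
  rw [← insert_Icc_right_eq_Icc_add_one h, sum_insert (by simp), add_comm]

theorem exists_integral_form_of_euler_lagrange {G : Type*} [AddCommGroup G]
    {a b : ℤ} {f h g : ℤ → G}
    (hEL : ∀ s ∈ Icc (a + 2) b,
      f s - (h s - h (s - 1)) + (g s - g (s - 1) - (g (s - 1) - g (s - 2))) = 0) :
    ∃ c₁ c₂ : G, ∀ t ∈ Icc a b,
      g t - ∑ τ₂ ∈ Icc a t, h τ₂ + ∑ τ₂ ∈ Icc a t, (∑ τ₁ ∈ Icc a τ₂, f τ₁ + c₁) - c₂ = 0 := by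
  set F : ℤ → G := fun t => ∑ τ ∈ Icc a t, f τ
  -- `D t` is the first difference of the integral form at `c₁ = 0`
  set D : ℤ → G := fun t => g (t + 1) - g t - h (t + 1) + F (t + 1)
  set E : ℤ → G := fun t => g t - ∑ τ₂ ∈ Icc a t, h τ₂ + ∑ τ₂ ∈ Icc a t, (F τ₂ - D a)
  have hD : ∀ t ∈ Icc a (b - 1), D t = D a := Int.eq_of_forall_add_one_eq fun t hat htb => by
    have hs := hEL (t + 2) (by simp only [mem_Icc]; omega)
    rw [show t + 2 - 1 = t + 1 by ring, show t + 2 - 2 = t by ring] at hs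
    rw [← sub_eq_zero, ← hs]
    simp only [D, F]
    rw [Int.sum_Icc_add_one_right (show a ≤ t + 1 + 1 by omega), show t + 1 + 1 = t + 2 by ring]
    abel
  have hE : ∀ t ∈ Icc a b, E t = E a := Int.eq_of_forall_add_one_eq fun t hat htb => by
    have hDt := hD t (by simp only [mem_Icc]; omega)
    simp only [E, Int.sum_Icc_add_one_right (show a ≤ t + 1 by omega)]
    rw [← sub_eq_zero, ← sub_eq_zero.mpr hDt]
    simp only [D, F]
    abel
  refine ⟨-D a, E a, fun t ht => ?_⟩
  simp only [← sub_eq_add_neg]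
  exact sub_eq_zero.mpr (hE t ht)

def jet (y : ℤ → ℝ) (t : ℤ) : ℝ × ℝ × ℝ :=
  (y t, y (t + 1) - y t, y (t + 2) - 2 * y (t + 1) + y t)

theorem jet_add_smul (y e : ℤ → ℝ) (ε : ℝ) (t : ℤ) :
    jet (y + ε • e) t = jet y t + ε • jet e t := by
  simp only [jet, Pi.add_apply, Pi.smul_apply, smul_eq_mul, Prod.mk_add_mk, Prod.smul_mk]
  refine Prod.ext rfl (Prod.ext ?_ ?_) <;> dsimp only <;> ring

theorem hasDerivAt_sum_jet_add_smul (S : Finset ℤ) {L : ℤ → ℝ × ℝ × ℝ → ℝ} {y : ℤ → ℝ}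
    (hL : ∀ t ∈ S, DifferentiableAt ℝ (L t) (jet y t)) (e : ℤ → ℝ) :
    HasDerivAt (fun ε : ℝ => ∑ t ∈ S, L t (jet (y + ε • e) t))
      (∑ t ∈ S, fderiv ℝ (L t) (jet y t) (jet e t)) 0 := by
  simp only [jet_add_smul]
  refine HasDerivAt.fun_sum fun t ht => (hL t ht).hasFDerivAt.comp_hasDerivAt_of_eq 0 ?_ (by simp)
  simpa using ((hasDerivAt_id (0 : ℝ)).smul_const (jet e t)).const_add (jet y t)

theorem ContinuousLinearMap.apply_prod_three (φ : ℝ × ℝ × ℝ →L[ℝ] ℝ) (u v w : ℝ) :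
    φ (u, v, w) = u * φ (1, 0, 0) + v * φ (0, 1, 0) + w * φ (0, 0, 1) := by
  have : (u, v, w) = u • ((1 : ℝ), (0 : ℝ), (0 : ℝ)) + v • ((0 : ℝ), (1 : ℝ), (0 : ℝ))
      + w • ((0 : ℝ), (0 : ℝ), (1 : ℝ)) := by simp
  rw [this, map_add, map_add, map_smul, map_smul, map_smul, smul_eq_mul, smul_eq_mul, smul_eq_mul]

theorem sum_apply_jet_single {S : Finset ℤ} {s : ℤ} (hs : s ∈ S) (hs₁ : s - 1 ∈ S)
    (hs₂ : s - 2 ∈ S) (φ : ℤ → ℝ × ℝ × ℝ →L[ℝ] ℝ) :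
    ∑ t ∈ S, φ t (jet (Pi.single s 1) t) =
      φ s (1, 0, 0) - (φ s (0, 1, 0) - φ (s - 1) (0, 1, 0))
        + (φ s (0, 0, 1) - φ (s - 1) (0, 0, 1) - (φ (s - 1) (0, 0, 1) - φ (s - 2) (0, 0, 1))) := by
  have jet_single : ∀ t, jet (Pi.single s 1) t =
      (if t = s then ((1 : ℝ), (-1 : ℝ), (1 : ℝ)) else 0)
        + (if t = s - 1 then ((0 : ℝ), (1 : ℝ), (-2 : ℝ)) else 0)
        + (if t = s - 2 then ((0 : ℝ), (0 : ℝ), (1 : ℝ)) else 0) := fun t => by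
    simp only [jet, Pi.single_apply]
    split_ifs <;> first | omega | simp
  simp only [jet_single, map_add, apply_ite (φ _), map_zero, sum_add_distrib, sum_ite_eq', hs, hs₁,
    hs₂, if_true]
  rw [(φ s).apply_prod_three, (φ (s - 1)).apply_prod_three, (φ (s - 2)).apply_prod_three]
  ring

noncomputable def action (a b : ℤ) (L : ℤ → ℝ × ℝ × ℝ → ℝ) (z : ℤ → ℝ) : ℝ :=
  ∑ t ∈ Icc a (b - 2), L t (jet z t)

def IsDiscreteLocalMinimizer (a b : ℤ) (L : ℤ → ℝ × ℝ × ℝ → ℝ) (y : ℤ → ℝ) : Prop :=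
  ∃ δ > (0 : ℝ), ∀ z : ℤ → ℝ,
    z a = y a → z (b - 1) = y (b - 1) →
    z (a + 1) - z a = y (a + 1) - y a →
    z b - z (b - 1) = y b - y (b - 1) →
    (∀ t ∈ Icc a b, |z t - y t| < δ) → action a b L y ≤ action a b L z

theorem IsDiscreteLocalMinimizer.isLocalMin_add_smul {a b : ℤ} {L : ℤ → ℝ × ℝ × ℝ → ℝ}
    {y : ℤ → ℝ} (hy : IsDiscreteLocalMinimizer a b L y) {e : ℤ → ℝ}
    (ha : e a = 0) (ha₁ : e (a + 1) = 0) (hb₁ : e (b - 1) = 0) (hb : e b = 0) :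
    IsLocalMin (fun ε : ℝ => action a b L (y + ε • e)) 0 := by
  obtain ⟨δ, hδ, hmin⟩ := hy
  have hclose : ∀ᶠ ε : ℝ in nhds 0, ∀ t ∈ Icc a b, |(y + ε • e) t - y t| < δ := by
    refine (Filter.eventually_all_finset _).mpr fun t _ => ?_
    simp only [Pi.add_apply, Pi.smul_apply, smul_eq_mul, add_sub_cancel_left]
    exact (continuous_id.mul continuous_const).abs.continuousAt.eventually_lt continuousAt_const
      (by simpa using hδ)
  filter_upwards [hclose] with ε hε
  simp only [zero_smul, add_zero]
  exact hmin _ (by simp [ha]) (by simp [hb₁]) (by simp [ha, ha₁]) (by simp [hb, hb₁]) hε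

theorem IsDiscreteLocalMinimizer.euler_lagrange {a b : ℤ} {L : ℤ → ℝ × ℝ × ℝ → ℝ}
    {y : ℤ → ℝ} (hy : IsDiscreteLocalMinimizer a b L y)
    (hL : ∀ t, DifferentiableAt ℝ (L t) (jet y t)) {s : ℤ} (hs : s ∈ Icc (a + 2) (b - 2)) :
    let φ := fun t => fderiv ℝ (L t) (jet y t)
    φ s (1, 0, 0) - (φ s (0, 1, 0) - φ (s - 1) (0, 1, 0))
        + (φ s (0, 0, 1) - φ (s - 1) (0, 0, 1) - (φ (s - 1) (0, 0, 1) - φ (s - 2) (0, 0, 1)))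
      = 0 := by
  intro φ
  rw [mem_Icc] at hs
  have hmin := hy.isLocalMin_add_smul (e := Pi.single s 1) (Pi.single_eq_of_ne (by omega) _)
    (Pi.single_eq_of_ne (by omega) _) (Pi.single_eq_of_ne (by omega) _)
    (Pi.single_eq_of_ne (by omega) _)
  rw [← sum_apply_jet_single (S := Icc a (b - 2)) (mem_Icc.mpr ⟨by omega, by omega⟩)
    (mem_Icc.mpr ⟨by omega, by omega⟩) (mem_Icc.mpr ⟨by omega, by omega⟩)]
  exact hmin.hasDerivAt_eq_zero (hasDerivAt_sum_jet_add_smul _ (fun t _ => hL t) _)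

theorem discrete_second_order_euler_lagrange_general
    (a b : ℤ)
    (L : ℤ → ℝ × ℝ × ℝ → ℝ) (hL : ∀ t, ContDiff ℝ 1 (L t))
    (y : ℤ → ℝ)
    (hmin : ∃ δ > (0 : ℝ), ∀ z : ℤ → ℝ,
      z a = y a → z (b - 1) = y (b - 1) →
      z (a + 1) - z a = y (a + 1) - y a →
      z b - z (b - 1) = y b - y (b - 1) →
      (∀ t ∈ Finset.Icc a b, |z t - y t| < δ) →
      ∑ t ∈ Finset.Icc a (b - 2),
          L t (y t, y (t + 1) - y t, y (t + 2) - 2 * y (t + 1) + y t)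
        ≤ ∑ t ∈ Finset.Icc a (b - 2),
          L t (z t, z (t + 1) - z t, z (t + 2) - 2 * z (t + 1) + z t)) :
    ∃ c₁ c₂ : ℝ, ∀ t ∈ Finset.Icc a (b - 2),
      fderiv ℝ (L t) (y t, y (t + 1) - y t, y (t + 2) - 2 * y (t + 1) + y t) (0, 0, 1)
        - (∑ τ₂ ∈ Finset.Icc a t, fderiv ℝ (L τ₂)
            (y τ₂, y (τ₂ + 1) - y τ₂, y (τ₂ + 2) - 2 * y (τ₂ + 1) + y τ₂) (0, 1, 0))
        + (∑ τ₂ ∈ Finset.Icc a t,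
            ((∑ τ₁ ∈ Finset.Icc a τ₂, fderiv ℝ (L τ₁)
              (y τ₁, y (τ₁ + 1) - y τ₁, y (τ₁ + 2) - 2 * y (τ₁ + 1) + y τ₁) (1, 0, 0)) + c₁))
        - c₂ = 0 := by
  have hy : IsDiscreteLocalMinimizer a b L y := hmin
  have hdiff : ∀ t, DifferentiableAt ℝ (L t) (jet y t) :=
    fun t => ((hL t).differentiable one_ne_zero).differentiableAt
  exact exists_integral_form_of_euler_lagrange fun s hs => hy.euler_lagrange hdiff hs

/-- Corollary 2 on `𝕋 = ℤ` (second-order discrete Euler–Lagrange equation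
in integral form).  Here `L t (u, v, w)` is the Lagrangian evaluated at
`(t, y(t), Δy(t), Δ²y(t))` with `Δy(t) = y(t+1)-y(t)` and
`Δ²y(t) = y(t+2) - 2y(t+1) + y(t)`; the functional is
`∑_{t=a}^{b-2} L(t,y(t),Δy(t),Δ²y(t))`, and the boundary data
`y(a), y(b-1), Δy(a), Δy(b-1)` are fixed.  If `y` is a local minimizer,
there are constants `c₁, c₂` such that for all `t ∈ [a, b-2] ∩ ℤ`:
`∂L/∂w(t) − ∑_{τ₂=a}^{t} ∂L/∂v(τ₂) + ∑_{τ₂=a}^{t} (∑_{τ₁=a}^{τ₂} ∂L/∂u(τ₁) + c₁) − c₂ = 0`. -/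
theorem discrete_second_order_euler_lagrange
    (a b : ℤ) (hab : a + 2 ≤ b)
    (L : ℤ → ℝ × ℝ × ℝ → ℝ) (hL : ∀ t, ContDiff ℝ 1 (L t))
    (y : ℤ → ℝ)
    (hmin : ∃ δ > (0 : ℝ), ∀ z : ℤ → ℝ,
      z a = y a → z (b - 1) = y (b - 1) →
      z (a + 1) - z a = y (a + 1) - y a →
      z b - z (b - 1) = y b - y (b - 1) →
      (∀ t ∈ Finset.Icc a b, |z t - y t| < δ) →
      ∑ t ∈ Finset.Icc a (b - 2),
          L t (y t, y (t + 1) - y t, y (t + 2) - 2 * y (t + 1) + y t)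
        ≤ ∑ t ∈ Finset.Icc a (b - 2),
          L t (z t, z (t + 1) - z t, z (t + 2) - 2 * z (t + 1) + z t)) :
    ∃ c₁ c₂ : ℝ, ∀ t ∈ Finset.Icc a (b - 2),
      fderiv ℝ (L t) (y t, y (t + 1) - y t, y (t + 2) - 2 * y (t + 1) + y t) (0, 0, 1)
        - (∑ τ₂ ∈ Finset.Icc a t, fderiv ℝ (L τ₂)
            (y τ₂, y (τ₂ + 1) - y τ₂, y (τ₂ + 2) - 2 * y (τ₂ + 1) + y τ₂) (0, 1, 0))
        + (∑ τ₂ ∈ Finset.Icc a t,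
            ((∑ τ₁ ∈ Finset.Icc a τ₂, fderiv ℝ (L τ₁)
              (y τ₁, y (τ₁ + 1) - y τ₁, y (τ₁ + 2) - 2 * y (τ₁ + 1) + y τ₁) (1, 0, 0)) + c₁))
        - c₂ = 0 :=
  discrete_second_order_euler_lagrange_general a b L hL y hmin
end

section
/- Let h > 0, r ≥ 1, and suppose y : h·ℤ → ℝ and L(t, u₀, …, u_r) is continuously differentiable in (u₀,…,u_r). Define the delta derivative g^Δ(t) = (g(t+h) − g(t))/h and write L_{u_i}(t) = ∂L/∂u_i (t, y(t), y^Δ(t), …, y^{Δ^r}(t)). If y satisfies the integral-form Euler–Lagrange equation (3.2) of the paper, i.e. L_{u_r}(t) − ∫_a^{σ(t)} L_{u_{r-1}}(τ_r)Δτ_r + ∑_{i=0}^{r-3} (−1)^i (iterated integrals of L_{u_{r-2-i}}) + (−1)^r (r-fold iterated integral of L_{u_0} with constants c₁,…,c_{r-1}) − c_r = 0 on [a, ρ^r(b)]∩h·ℤ, then delta differentiating r times and using the formula (3.9) yields the h-Euler–Lagrange equation in differentiated form: (L_{u_r})^{Δ^r}(t) + ∑_{i=0}^{r-1} (−1)^{r-i}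 (L_{u_i})^{Δ^i}(σ^{r-i}(t)) = 0, where σ(t) = t+h and σ^k(t) = t + kh. -/
/-!
Restricted to the grid points `t ≥ a`, indexed by `ℕ`, the delta derivative inverts the delta
integral up to a shift, `Δ (∫_a^{σ(t)} u) = u ∘ σ`, and commutes with `σ`. (On all of `ℤ` this
fails below the grid start, where the sum is empty.) Applying `Δ^r` to the integral form of the
Euler–Lagrange equation therefore turns each `(r - i)`-fold integral of `g_i` into
`(g_i)^{Δ^i} ∘ σ^{r-i}`, kills the constants `c_m`, and turns the nested integral of `g_0` into
`g_0 ∘ σ^r`.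
-/

open Finset

variable {𝕜 : Type*} [Field 𝕜] (h : 𝕜)

noncomputable def deltaDeriv : Module.End 𝕜 (ℕ → 𝕜) where
  toFun u k := (u (k + 1) - u k) / h
  map_add' u v := by ext k; simp only [Pi.add_apply]; ring
  map_smul' a u := by ext k; simp only [Pi.smul_apply, smul_eq_mul, RingHom.id_apply]; ring

/-- `∫_a^{σ(t)} u Δτ` at `t = a + k h`. -/
def deltaInt (u : ℕ → 𝕜) (k : ℕ) : 𝕜 := h * ∑ j ∈ range (k + 1), u j

variable {h}

lemma deltaDeriv_apply (u : ℕ → 𝕜) (k : ℕ) : deltaDeriv h u k = (u (k + 1) - u k) / h := rfl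

lemma deltaDeriv_pow_succ_const (m : ℕ) (a : 𝕜) : (deltaDeriv h ^ (m + 1)) (fun _ => a) = 0 := by
  have hconst : deltaDeriv h (fun _ => a) = 0 := by ext k; simp [deltaDeriv_apply]
  rw [pow_succ, Module.End.mul_apply, hconst, map_zero]

lemma deltaDeriv_pow_comp_add (m s : ℕ) (u : ℕ → 𝕜) :
    (deltaDeriv h ^ m) (fun k => u (k + s)) = fun k => (deltaDeriv h ^ m) u (k + s) := by
  induction m generalizing u with
  | zero => rfl
  | succ m ih =>
    have hshift : deltaDeriv h (fun k => u (k + s)) = fun k => deltaDeriv h u (k + s) := by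
      ext k; simp only [deltaDeriv_apply, Nat.add_right_comm k 1 s]
    simp only [pow_succ, Module.End.mul_apply, hshift, ih]

lemma deltaDeriv_deltaInt (hh : h ≠ 0) (u : ℕ → 𝕜) :
    deltaDeriv h (deltaInt h u) = fun k => u (k + 1) := by
  ext k
  rw [deltaDeriv_apply, deltaInt, deltaInt, sum_range_succ _ (k + 1)]
  field_simp
  ring

lemma deltaDeriv_pow_succ_deltaInt (hh : h ≠ 0) (m : ℕ) (u : ℕ → 𝕜) :
    (deltaDeriv h ^ (m + 1)) (deltaInt h u) = fun k => (deltaDeriv h ^ m) u (k + 1) := by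
  rw [pow_succ, Module.End.mul_apply, deltaDeriv_deltaInt hh, deltaDeriv_pow_comp_add]

lemma deltaDeriv_pow_deltaInt_iterate (hh : h ≠ 0) (m : ℕ) (u : ℕ → 𝕜) :
    (deltaDeriv h ^ m) ((deltaInt h)^[m] u) = fun k => u (k + m) := by
  induction m with
  | zero => rfl
  | succ m ih =>
    rw [Function.iterate_succ_apply', deltaDeriv_pow_succ_deltaInt hh, ih]
    ext k
    simp only [Nat.add_right_comm k 1 m, add_assoc]

lemma deltaDeriv_pow_deltaInt_iterate_of_le (hh : h ≠ 0) {i m : ℕ} (him : i ≤ m) (u : ℕ → 𝕜) :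
    (deltaDeriv h ^ m) ((deltaInt h)^[m - i] u) = fun k => (deltaDeriv h ^ i) u (k + (m - i)) := by
  obtain ⟨j, rfl⟩ := Nat.exists_eq_add_of_le him
  rw [Nat.add_sub_cancel_left, pow_add, Module.End.mul_apply,
    deltaDeriv_pow_deltaInt_iterate hh, deltaDeriv_pow_comp_add]

lemma deltaDeriv_pow_of_eq_deltaInt_add_const (hh : h ≠ 0) (c : ℕ → 𝕜) (T : ℕ → ℕ → 𝕜)
    (hT : ∀ m, T (m + 1) = deltaInt h (T m) + fun _ => c (m + 1)) (m : ℕ) :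
    (deltaDeriv h ^ m) (T m) = fun k => T 0 (k + m) := by
  induction m with
  | zero => rfl
  | succ m ih =>
    rw [hT, map_add, deltaDeriv_pow_succ_const, add_zero, deltaDeriv_pow_succ_deltaInt hh, ih]
    ext k
    simp only [Nat.add_right_comm k 1 m, add_assoc]

theorem eulerLagrange_differentiated_of_integral_form (hh : h ≠ 0) {r : ℕ} (hr : 1 ≤ r)
    (u : ℕ → ℕ → 𝕜) (c : ℕ → 𝕜) (T : ℕ → ℕ → 𝕜) (hT0 : T 0 = u 0)
    (hT : ∀ m, T (m + 1) = deltaInt h (T m) + fun _ => c (m + 1))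
    (hEL : u r + ∑ i ∈ Ico 1 r, (-1 : 𝕜) ^ (r - i) • (deltaInt h)^[r - i] (u i)
        + (-1 : 𝕜) ^ r • deltaInt h (T (r - 1)) - (fun _ => c r) = 0) (k : ℕ) :
    (deltaDeriv h ^ r) (u r) k
      + ∑ i ∈ range r, (-1 : 𝕜) ^ (r - i) * (deltaDeriv h ^ i) (u i) (k + (r - i)) = 0 := by
  obtain ⟨p, rfl⟩ := Nat.exists_eq_add_of_le' hr
  have hterms : ∀ i ∈ Ico 1 (p + 1),
      (-1 : 𝕜) ^ (p + 1 - i) • (deltaDeriv h ^ (p + 1)) ((deltaInt h)^[p + 1 - i] (u i))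
        = (-1 : 𝕜) ^ (p + 1 - i) • fun k => (deltaDeriv h ^ i) (u i) (k + (p + 1 - i)) :=
    fun i hi => by rw [deltaDeriv_pow_deltaInt_iterate_of_le hh (mem_Ico.1 hi).2.le]
  have hdiff := congrFun (congrArg (deltaDeriv h ^ (p + 1)) hEL) k
  simp only [map_sub, map_add, map_sum, map_smul, deltaDeriv_pow_succ_const, sub_zero,
    Nat.add_sub_cancel, deltaDeriv_pow_succ_deltaInt hh, sum_congr rfl hterms,
    deltaDeriv_pow_of_eq_deltaInt_add_const hh c T hT, hT0, map_zero, Pi.add_apply,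
    Pi.smul_apply, Finset.sum_apply, smul_eq_mul, Pi.zero_apply, Nat.add_right_comm k 1 p,
    Nat.add_assoc k p 1] at hdiff
  rw [range_eq_Ico, sum_eq_sum_Ico_succ_bot (Nat.succ_pos p)]
  simp only [Nat.sub_zero, pow_zero, Module.End.one_apply, zero_add]
  linear_combination hdiff

section Restriction

variable {D J : (ℤ → 𝕜) → (ℤ → 𝕜)}

lemma semiconj_comp_natCast_deltaDeriv (hD : ∀ g n, D g n = (g (n + 1) - g n) / h) :
    Function.Semiconj (fun F : ℤ → 𝕜 => F ∘ ((↑) : ℕ → ℤ)) D (deltaDeriv h) := fun F => by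
  ext k
  simp [hD, deltaDeriv_apply]

lemma semiconj_comp_natCast_deltaInt
    (hJ : ∀ g n, J g n = h * ∑ k ∈ range (n + 1).toNat, g k) :
    Function.Semiconj (fun F : ℤ → 𝕜 => F ∘ ((↑) : ℕ → ℤ)) J (deltaInt h) := fun F => by
  ext k
  simp [hJ, deltaInt]

end Restriction

theorem h_euler_lagrange_differentiated_general (h : ℝ) (hh : 0 < h)
    (r : ℕ) (hr : 1 ≤ r)
    (D : (ℤ → ℝ) → (ℤ → ℝ)) (hD : ∀ g n, D g n = (g (n + 1) - g n) / h)
    (J : (ℤ → ℝ) → (ℤ → ℝ))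
    (hJ : ∀ g n, J g n = h * ∑ k ∈ Finset.range (n + 1).toNat, g k)
    (g : ℕ → ℤ → ℝ)
    (c : ℕ → ℝ) (T : ℕ → ℤ → ℝ) (hT0 : T 0 = g 0)
    (hTS : ∀ m, T (m + 1) = fun n => J (T m) n + c (m + 1))
    (hEL : ∀ n : ℤ, 0 ≤ n →
      g r n + (∑ i ∈ Finset.Ico 1 r, (-1 : ℝ) ^ (r - i) * J^[r - i] (g i) n)
        + (-1 : ℝ) ^ r * J (T (r - 1)) n - c r = 0) :
    ∀ n : ℤ, 0 ≤ n →
      D^[r] (g r) n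
        + ∑ i ∈ Finset.range r,
            (-1 : ℝ) ^ (r - i) * D^[i] (g i) (n + ((r - i : ℕ) : ℤ)) = 0 := by
  have hDn := semiconj_comp_natCast_deltaDeriv hD
  have hJn := semiconj_comp_natCast_deltaInt hJ
  have hTnat : ∀ m, T (m + 1) ∘ (↑) = deltaInt h (T m ∘ (↑)) + fun _ => c (m + 1) := fun m => by
    rw [hTS, ← hJn.eq]
    rfl
  have hELnat : g r ∘ (↑) + ∑ i ∈ Ico 1 r, (-1 : ℝ) ^ (r - i) • (deltaInt h)^[r - i] (g i ∘ (↑))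
      + (-1 : ℝ) ^ r • deltaInt h (T (r - 1) ∘ (↑)) - (fun _ => c r) = 0 := by
    ext k
    simpa [← hJn.eq, ← (hJn.iterate_right _).eq] using hEL k k.cast_nonneg
  intro n hn
  lift n to ℕ using hn
  have := eulerLagrange_differentiated_of_integral_form hh.ne' hr (fun i => g i ∘ (↑)) c
    (fun m => T m ∘ (↑)) (by rw [hT0]) hTnat hELnat n
  simpa [Module.End.coe_pow, ← (hDn.iterate_right _).eq] using this

/-- The h-Euler–Lagrange equation of Section 3.3: on the time scale `h·ℤ`
(grid points `t = a + n·h` indexed by `n : ℤ`), with delta derivative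
`D g n = (g(n+1) - g(n))/h` and delta integral `J g n = h·∑_{k=0}^{n} g(k)`
(`= ∫_a^{σ(t)} g Δξ`), let `gᵢ(n) = ∂L/∂uᵢ(t, y(t), y^Δ(t), …, y^{Δ^r}(t))`
be the composed partial derivatives of the Lagrangian `L(t, u₀, …, u_r)`
along `y`.  If `y` satisfies the integral-form Euler–Lagrange equation (3.2),
`g_r(t) + ∑_{i=1}^{r-1} (−1)^{r-i} (J^{r-i} g_i)(t) + (−1)^r (J T_{r-1})(t) − c_r = 0`
(where `T₀ = g₀`, `T_{m+1} = J T_m + c_{m+1}` carries the integration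
constants `c₁, …, c_{r-1}`), then delta differentiating `r` times and using
formula (3.9) yields the differentiated form
`(g_r)^{Δ^r}(t) + ∑_{i=0}^{r-1} (−1)^{r-i} (g_i)^{Δ^i}(σ^{r-i}(t)) = 0`. -/
theorem h_euler_lagrange_differentiated (h : ℝ) (hh : 0 < h) (a : ℝ)
    (r : ℕ) (hr : 1 ≤ r)
    (L : ℝ → (Fin (r + 1) → ℝ) → ℝ) (hL : ∀ t, ContDiff ℝ 1 (L t))
    (y : ℤ → ℝ)
    (D : (ℤ → ℝ) → (ℤ → ℝ)) (hD : ∀ g n, D g n = (g (n + 1) - g n) / h)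
    (J : (ℤ → ℝ) → (ℤ → ℝ))
    (hJ : ∀ g n, J g n = h * ∑ k ∈ Finset.range (n + 1).toNat, g k)
    (g : ℕ → ℤ → ℝ)
    (hg : ∀ i : Fin (r + 1), ∀ n : ℤ,
      g i n = fderiv ℝ (L (a + n * h)) (fun j => D^[(j : ℕ)] y n) (Pi.single i 1))
    (c : ℕ → ℝ) (T : ℕ → ℤ → ℝ) (hT0 : T 0 = g 0)
    (hTS : ∀ m, T (m + 1) = fun n => J (T m) n + c (m + 1))
    (hEL : ∀ n : ℤ, 0 ≤ n →
      g r n + (∑ i ∈ Finset.Ico 1 r, (-1 : ℝ) ^ (r - i) * J^[r - i] (g i) n)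
        + (-1 : ℝ) ^ r * J (T (r - 1)) n - c r = 0) :
    ∀ n : ℤ, 0 ≤ n →
      D^[r] (g r) n
        + ∑ i ∈ Finset.range r,
            (-1 : ℝ) ^ (r - i) * D^[i] (g i) (n + ((r - i : ℕ) : ℤ)) = 0 :=
  h_euler_lagrange_differentiated_general h hh r hr D hD J hJ g c T hT0 hTS hEL
end
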